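/- arXiv:1910.03972 — 3 statements merged into one kernel-verified Lean document; each statement's English description precedes it below -/
import Mathlib

section
/- There is a constant C > 0 such that for all nonzero vectors η, z ∈ ℝ² and all signs ε₁, ε₂ ∈ {+1, −1}: (i) Π_{ε₂}(z) β Π_{ε₁}(η) = β Π_{−ε₂}(z) Π_{ε₁}(η), and (ii) the operator norm of the matrix Π_{ε₂}(z) β Π_{ε₁}(η) is at most C · ∠(ε₁η, ε₂z). -/
noncomputable section

open MeasureTheory Complex InnerProductGeometry
open scoped Real ENNReal

abbrev R2 : Type := EuclideanSpace ℝ (Fin 2)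
abbrev Spacetime : Type := ℝ × R2
abbrev C2 : Type := Fin 2 → ℂ

/-- The Dirac matrix α¹. -/
def alphaM1 : Matrix (Fin 2) (Fin 2) ℂ := !![0, 1; 1, 0]

/-- The Dirac matrix α². -/
def alphaM2 : Matrix (Fin 2) (Fin 2) ℂ := !![0, -Complex.I; Complex.I, 0]

/-- The Dirac matrix β. -/
def betaM : Matrix (Fin 2) (Fin 2) ℂ := !![1, 0; 0, -1]

/-- ξ·α = ξ₁α¹ + ξ₂α². -/
def xiAlpha (ξ : R2) : Matrix (Fin 2) (Fin 2) ℂ :=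
  (ξ 0 : ℂ) • alphaM1 + (ξ 1 : ℂ) • alphaM2

/-- The Dirac projection Π_ε(ξ) = ½(I + ε(ξ·α)/|ξ|). -/
def PiMat (ε : ℝ) (ξ : R2) : Matrix (Fin 2) (Fin 2) ℂ :=
  (1 / 2 : ℂ) • (1 + ((ε / ‖ξ‖ : ℝ) : ℂ) • xiAlpha ξ)

/-- The Euclidean norm on ℂ². -/
def c2norm (v : C2) : ℝ := Real.sqrt (‖v 0‖ ^ 2 + ‖v 1‖ ^ 2)

/-- The ℂ² inner product ⟨a,b⟩ = a₁ conj b₁ + a₂ conj b₂. -/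
def c2inn (a b : C2) : ℂ :=
  a 0 * (starRingEnd ℂ) (b 0) + a 1 * (starRingEnd ℂ) (b 1)

/-- Japanese bracket of a real number. -/
def jb (a : ℝ) : ℝ := Real.sqrt (1 + a ^ 2)

/-- Japanese bracket of a vector in ℝ². -/
def jbv (x : R2) : ℝ := Real.sqrt (1 + ‖x‖ ^ 2)

/-- Space-time Fourier transform on ℝ_t × ℝ²_x. -/
def ftST {E : Type} [NormedAddCommGroup E] [NormedSpace ℂ E] (u : Spacetime → E) (p : Spacetime) : E :=
  ∫ q : Spacetime, Complex.exp (-(2 * (Real.pi : ℂ) * Complex.I) *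
    Complex.ofReal (q.1 * p.1 + (inner ℝ q.2 p.2 : ℝ))) • u q

/-- Fourier transform in the space variable only. -/
def ftSpace {E : Type} [NormedAddCommGroup E] [NormedSpace ℂ E] (u : Spacetime → E) (t : ℝ) (ξ : R2) :
    E :=
  ∫ x : R2, Complex.exp (-(2 * (Real.pi : ℂ) * Complex.I) *
    Complex.ofReal (inner ℝ x ξ : ℝ)) • u (t, x)

/-- The Fourier multiplier Π_ε(D) in the space variable, with matrix symbol Π_ε(ξ). -/
def piD (ε : ℝ) (ψ : Spacetime → C2) (q : Spacetime) : C2 :=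
  ∫ ξ : R2, Complex.exp ((2 * (Real.pi : ℂ) * Complex.I) *
    Complex.ofReal (inner ℝ q.2 ξ : ℝ)) • (PiMat ε ξ).mulVec (ftSpace ψ q.1 ξ)

/-- The exponent r' dual to r (for 1 ≤ r). -/
def dualExp (r : ℝ) : ℝ≥0∞ := if r = 1 then ⊤ else ENNReal.ofReal (r / (r - 1))

/-- Weight ⟨ξ⟩^s ⟨|τ|−|ξ|⟩^b. -/
def wX (s b : ℝ) (p : Spacetime) : ℝ := jbv p.2 ^ s * jb (|p.1| - ‖p.2‖) ^ b

/-- Weight ⟨ξ⟩^s ⟨τ+ε|ξ|⟩^b. -/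
def wXpm (ε s b : ℝ) (p : Spacetime) : ℝ := jbv p.2 ^ s * jb (p.1 + ε * ‖p.2‖) ^ b

/-- The norm of X^r_{s,b} for scalar functions. -/
def Xnorm (r s b : ℝ) (u : Spacetime → ℂ) : ℝ≥0∞ :=
  eLpNorm (fun p => wX s b p * ‖ftST u p‖) (dualExp r) volume

/-- The norm of X^r_{s,b,ε} for scalar functions. -/
def XnormPM (r s b ε : ℝ) (u : Spacetime → ℂ) : ℝ≥0∞ :=
  eLpNorm (fun p => wXpm ε s b p * ‖ftST u p‖) (dualExp r) volume

/-- The norm of X^r_{s,b} for ℂ²-valued functions. -/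
def Xnorm2 (r s b : ℝ) (ψ : Spacetime → C2) : ℝ≥0∞ :=
  eLpNorm (fun p => wX s b p * c2norm (ftST ψ p)) (dualExp r) volume

/-- The norm of X^r_{s,b,ε} for ℂ²-valued functions. -/
def XnormPM2 (r s b ε : ℝ) (ψ : Spacetime → C2) : ℝ≥0∞ :=
  eLpNorm (fun p => wXpm ε s b p * c2norm (ftST ψ p)) (dualExp r) volume

/-- The null form ⟨βΠ_{ε₁}(D)ψ, Π_{ε₂}(D)ψ'⟩. -/
def DiracB (ε₁ ε₂ : ℝ) (ψ ψ' : Spacetime → C2) (q : Spacetime) : ℂ :=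
  c2inn (betaM.mulVec (piD ε₁ ψ q)) (piD ε₂ ψ' q)
/-- The operator norm of a 2×2 complex matrix, acting on Euclidean ℂ². -/
def opNorm (M : Matrix (Fin 2) (Fin 2) ℂ) : ℝ :=
  ‖LinearMap.toContinuousLinearMap (Matrix.toEuclideanLin M)‖


section AuxNull

lemma piMat_eq' (ε : ℝ) (ξ : R2) :
    PiMat ε ξ = !![1/2, (((ε * ξ 0 / ‖ξ‖ : ℝ):ℂ) - ((ε * ξ 1 / ‖ξ‖ : ℝ):ℂ) * Complex.I)/2;
                  (((ε * ξ 0 / ‖ξ‖:ℝ):ℂ) + ((ε * ξ 1 / ‖ξ‖:ℝ):ℂ) * Complex.I)/2, 1/2] := by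
  ext i j
  fin_cases i <;> fin_cases j <;>
    simp [PiMat, xiAlpha, alphaM1, alphaM2, Matrix.one_apply] <;> push_cast <;> ring

lemma anticomm' (ε : ℝ) (ξ : R2) : PiMat ε ξ * betaM = betaM * PiMat (-ε) ξ := by
  ext i j
  fin_cases i <;> fin_cases j <;>
    simp [PiMat, xiAlpha, alphaM1, alphaM2, betaM, Matrix.one_apply, Matrix.mul_apply,
      Fin.sum_univ_two] <;> push_cast <;> ring

lemma prod_eq' (p q r s : ℝ) :
    !![(1:ℂ)/2, ((r:ℂ) - (s:ℂ)*Complex.I)/2; ((r:ℂ)+(s:ℂ)*Complex.I)/2, 1/2] * betaM *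
    !![(1:ℂ)/2, ((p:ℂ) - (q:ℂ)*Complex.I)/2; ((p:ℂ)+(q:ℂ)*Complex.I)/2, 1/2] =
    !![(((1 - (r*p+s*q))/4 :ℝ):ℂ) + ((-(r*q-s*p)/4:ℝ):ℂ)*Complex.I,
       (((p-r)/4:ℝ):ℂ) + ((-(q-s)/4:ℝ):ℂ)*Complex.I;
       (((r-p)/4:ℝ):ℂ) + (((s-q)/4:ℝ):ℂ)*Complex.I,
       (((r*p+s*q-1)/4:ℝ):ℂ) + (((s*p-r*q)/4:ℝ):ℂ)*Complex.I] := by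
  ext i j
  fin_cases i <;> fin_cases j <;>
    simp [betaM, Matrix.mul_apply, Fin.sum_univ_two, Complex.ext_iff] <;>
    push_cast <;> constructor <;> ring

lemma opNorm_le3' (M : Matrix (Fin 2) (Fin 2) ℂ) (c : ℝ) (hc : 0 ≤ c)
    (h : ∀ i j, ‖M i j‖ ≤ c) : opNorm M ≤ 3 * c := by
  refine ContinuousLinearMap.opNorm_le_bound _ (by positivity) fun x => ?_
  have hxnorm : ‖x‖ = Real.sqrt (‖x 0‖^2 + ‖x 1‖^2) := by
    rw [EuclideanSpace.norm_eq]; simp [Fin.sum_univ_two]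
  have hx : ∀ j : Fin 2, ‖x j‖ ≤ ‖x‖ := by
    intro j
    have h1 : ‖x j‖ = Real.sqrt (‖x j‖^2) := (Real.sqrt_sq (norm_nonneg _)).symm
    rw [h1, hxnorm]
    apply Real.sqrt_le_sqrt
    fin_cases j
    · exact le_add_of_nonneg_right (sq_nonneg _)
    · exact le_add_of_nonneg_left (sq_nonneg _)
  set y := LinearMap.toContinuousLinearMap (Matrix.toEuclideanLin M) x with hy
  have hyi : ∀ i : Fin 2, y i = M i 0 * x 0 + M i 1 * x 1 := by
    intro i
    show (Matrix.toEuclideanLin M x) i = _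
    rw [Matrix.toEuclideanLin_apply]
    simp [Matrix.mulVec, dotProduct, Fin.sum_univ_two]
  have hyb : ∀ i : Fin 2, ‖y i‖ ≤ 2 * c * ‖x‖ := by
    intro i
    rw [hyi i]
    calc ‖M i 0 * x 0 + M i 1 * x 1‖ ≤ ‖M i 0 * x 0‖ + ‖M i 1 * x 1‖ := norm_add_le _ _
    _ = ‖M i 0‖ * ‖x 0‖ + ‖M i 1‖ * ‖x 1‖ := by rw [norm_mul, norm_mul]
    _ ≤ c * ‖x‖ + c * ‖x‖ := by
        have h0 : ‖M i 0‖ ≤ c := by simpa using h i 0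
        have h1 : ‖M i 1‖ ≤ c := by simpa using h i 1
        gcongr <;> first | exact h0 | exact h1 | exact hx 0 | exact hx 1
    _ = 2 * c * ‖x‖ := by ring
  have hynorm : ‖y‖ = Real.sqrt (‖y 0‖^2 + ‖y 1‖^2) := by
    rw [EuclideanSpace.norm_eq]; simp [Fin.sum_univ_two]
  rw [hynorm]
  have h3 : (0:ℝ) ≤ 3 * c * ‖x‖ := by positivity
  rw [show (3 * c * ‖x‖ : ℝ) = Real.sqrt ((3*c*‖x‖)^2) from (Real.sqrt_sq h3).symm]
  apply Real.sqrt_le_sqrt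
  nlinarith [hyb 0, hyb 1, norm_nonneg (y 0), norm_nonneg (y 1), norm_nonneg x,
    mul_nonneg (mul_nonneg (by norm_num : (0:ℝ) ≤ 2) hc) (norm_nonneg x)]

lemma absRI' (a b : ℝ) : ‖(a:ℂ) + (b:ℂ)*Complex.I‖ ≤ |a| + |b| := by
  calc ‖(a:ℂ) + (b:ℂ)*Complex.I‖
      ≤ |((a:ℂ) + (b:ℂ)*Complex.I).re| + |((a:ℂ) + (b:ℂ)*Complex.I).im| :=
        Complex.norm_le_abs_re_add_abs_im _
    _ = |a| + |b| := by simp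

end AuxNull

set_option maxHeartbeats 2000000 in
/-- Π_{ε₂}(z) β Π_{ε₁}(η) = β Π_{−ε₂}(z) Π_{ε₁}(η), and this matrix has operator
norm bounded by a constant times the angle ∠(ε₁η, ε₂z). -/
theorem dirac_projection_null_structure :
    ∃ C : ℝ, 0 < C ∧ ∀ (η z : R2), η ≠ 0 → z ≠ 0 →
      ∀ ε₁ ε₂ : ℝ, (ε₁ = 1 ∨ ε₁ = -1) → (ε₂ = 1 ∨ ε₂ = -1) →
        PiMat ε₂ z * betaM * PiMat ε₁ η = betaM * PiMat (-ε₂) z * PiMat ε₁ η ∧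
        opNorm (PiMat ε₂ z * betaM * PiMat ε₁ η) ≤ C * angle (ε₁ • η) (ε₂ • z) := by
  refine ⟨3, by norm_num, ?_⟩
  intro η z hη hz ε₁ ε₂ hε₁ hε₂
  have hnη : ‖η‖ ≠ 0 := norm_ne_zero_iff.mpr hη
  have hnz : ‖z‖ ≠ 0 := norm_ne_zero_iff.mpr hz
  constructor
  · rw [anticomm' ε₂ z]
  · set θ := angle (ε₁ • η) (ε₂ • z) with hθdef
    set p : ℝ := ε₁ * η 0 / ‖η‖ with hp
    set q : ℝ := ε₁ * η 1 / ‖η‖ with hq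
    set r : ℝ := ε₂ * z 0 / ‖z‖ with hr
    set s : ℝ := ε₂ * z 1 / ‖z‖ with hs
    have hε₁sq : ε₁^2 = 1 := by rcases hε₁ with h|h <;> rw [h] <;> norm_num
    have hε₂sq : ε₂^2 = 1 := by rcases hε₂ with h|h <;> rw [h] <;> norm_num
    have hηsq : ‖η‖^2 = η 0^2 + η 1^2 := by
      rw [EuclideanSpace.norm_eq, Real.sq_sqrt (by positivity)]
      simp [Fin.sum_univ_two, Real.norm_eq_abs, sq_abs]
    have hzsq : ‖z‖^2 = z 0^2 + z 1^2 := by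
      rw [EuclideanSpace.norm_eq, Real.sq_sqrt (by positivity)]
      simp [Fin.sum_univ_two, Real.norm_eq_abs, sq_abs]
    have hpq : p^2 + q^2 = 1 := by
      rw [hp, hq]; field_simp
      linear_combination (η 0^2 + η 1^2) * hε₁sq - hηsq
    have hrs : r^2 + s^2 = 1 := by
      rw [hr, hs]; field_simp
      linear_combination (z 0^2 + z 1^2) * hε₂sq - hzsq
    have hcos : Real.cos θ = p*r + q*s := by
      rw [hθdef, InnerProductGeometry.cos_angle]
      have hip : (inner ℝ (ε₁ • η) (ε₂ • z) : ℝ) = ε₁*ε₂*(η 0 * z 0 + η 1 * z 1) := by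
        rw [real_inner_smul_left, real_inner_smul_right]
        simp [PiLp.inner_apply, RCLike.inner_apply, Fin.sum_univ_two]
        ring
      have hn1 : ‖ε₁ • η‖ = ‖η‖ := by
        rw [norm_smul]; rcases hε₁ with h|h <;> simp [h, Real.norm_eq_abs]
      have hn2 : ‖ε₂ • z‖ = ‖z‖ := by
        rw [norm_smul]; rcases hε₂ with h|h <;> simp [h, Real.norm_eq_abs]
      rw [hip, hn1, hn2, hp, hq, hr, hs]
      field_simp
    have hθ0 : 0 ≤ θ := angle_nonneg _ _
    have hθπ : θ ≤ π := angle_le_pi _ _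
    have hπ4 : π ≤ 4 := by linarith [Real.pi_le_four]
    have hcosub : 1 - Real.cos θ ≤ θ^2/2 := by
      have := Real.one_sub_sq_div_two_le_cos (x := θ); linarith
    have hcos2θ : 1 - Real.cos θ ≤ 2*θ := by nlinarith
    have hsinθ : Real.sin θ ≤ θ := by
      have := Real.abs_sin_le_abs (x := θ)
      rw [_root_.abs_of_nonneg hθ0] at this
      exact (abs_le.mp this).2
    have hsin0 : 0 ≤ Real.sin θ := Real.sin_nonneg_of_nonneg_of_le_pi hθ0 hθπ
    have hcross : |r*q - s*p| = Real.sin θ := by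
      have hkey : (r*q - s*p)^2 + (p*r+q*s)^2 = 1 := by
        linear_combination (r^2+s^2) * hpq + hrs
      have hsq : (r*q - s*p)^2 = Real.sin θ^2 := by
        have hpyth := Real.sin_sq_add_cos_sq θ
        rw [hcos] at hpyth; linarith
      calc |r*q - s*p| = Real.sqrt ((r*q-s*p)^2) := (Real.sqrt_sq_eq_abs _).symm
        _ = Real.sqrt (Real.sin θ^2) := by rw [hsq]
        _ = Real.sin θ := Real.sqrt_sq hsin0
    have hcrossθ : |r*q - s*p| ≤ θ := by rw [hcross]; exact hsinθ
    have hcos01 : 0 ≤ 1 - (p*r + q*s) := by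
      have := Real.cos_le_one θ; rw [hcos] at this; linarith
    have hA1 : |1 - (r*p+s*q)| ≤ 2*θ := by
      have h1 : 0 ≤ 1 - (r*p + s*q) := by linarith [hcos01]
      rw [_root_.abs_of_nonneg h1]
      have h2 := hcos2θ; rw [hcos] at h2; linarith
    have hdiff : (p-r)^2 + (q-s)^2 = 2 - 2*(p*r+q*s) := by
      linear_combination hpq + hrs
    have hdθ : (p-r)^2 + (q-s)^2 ≤ θ^2 := by
      rw [hdiff]
      have : 1 - Real.cos θ ≤ θ^2/2 := hcosub
      rw [hcos] at this; linarith
    have hA3 : |p - r| ≤ θ := by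
      calc |p - r| = Real.sqrt ((p-r)^2) := (Real.sqrt_sq_eq_abs _).symm
        _ ≤ Real.sqrt (θ^2) := Real.sqrt_le_sqrt (by nlinarith [sq_nonneg (q-s)])
        _ = θ := Real.sqrt_sq hθ0
    have hA4 : |q - s| ≤ θ := by
      calc |q - s| = Real.sqrt ((q-s)^2) := (Real.sqrt_sq_eq_abs _).symm
        _ ≤ Real.sqrt (θ^2) := Real.sqrt_le_sqrt (by nlinarith [sq_nonneg (p-r)])
        _ = θ := Real.sqrt_sq hθ0
    have hM : PiMat ε₂ z * betaM * PiMat ε₁ η =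
        !![(((1 - (r*p+s*q))/4 :ℝ):ℂ) + ((-(r*q-s*p)/4:ℝ):ℂ)*Complex.I,
           (((p-r)/4:ℝ):ℂ) + ((-(q-s)/4:ℝ):ℂ)*Complex.I;
           (((r-p)/4:ℝ):ℂ) + (((s-q)/4:ℝ):ℂ)*Complex.I,
           (((r*p+s*q-1)/4:ℝ):ℂ) + (((s*p-r*q)/4:ℝ):ℂ)*Complex.I] := by
      rw [piMat_eq' ε₂ z, piMat_eq' ε₁ η, ← hp, ← hq, ← hr, ← hs]
      exact prod_eq' p q r s
    rw [hM]
    apply opNorm_le3' _ θ hθ0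
    intro i j
    have e1 : |s*p - r*q| = |r*q - s*p| := abs_sub_comm _ _
    have e2 : |r*p+s*q-1| = |1-(r*p+s*q)| := abs_sub_comm _ _
    have e3 : |r-p| = |p-r| := abs_sub_comm _ _
    have e4 : |s-q| = |q-s| := abs_sub_comm _ _
    have e5 : |(-(r*q-s*p))| = |r*q-s*p| := abs_neg _
    have e6 : |(-(q-s))| = |q-s| := abs_neg _
    fin_cases i <;> fin_cases j <;>
      refine le_trans (by
        first
          | exact absRI' _ _
          | simpa using absRI' ((1 - (r*p+s*q))/4) (-(r*q-s*p)/4)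
          | simpa using absRI' ((p-r)/4) (-(q-s)/4)
          | simpa using absRI' ((r-p)/4) ((s-q)/4)
          | simpa using absRI' ((r*p+s*q-1)/4) ((s*p-r*q)/4)) ?_ <;>
      rw [abs_div, abs_div, show |(4:ℝ)| = 4 by norm_num] <;>
      linarith [hA1, hA3, hA4, hcrossθ, hθ0, e1, e2, e3, e4, e5, e6]
end
end

section
/- There exist constants c, C > 0 such that for all ξ, η ∈ ℝ² with η ≠ 0 and η ≠ ξ, the angle ∠(η, η−ξ) satisfies c·R ≤ ∠(η, η−ξ) ≤ C·R, where R = |ξ|^{1/2} (|ξ| − ||η| − |η−ξ||)^{1/2} / (|η|^{1/2} |η−ξ|^{1/2}). (Note |ξ| ≥ ||η| − |η−ξ|| by the triangle inequality, so R is well defined.) -/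
noncomputable section

open MeasureTheory Complex InnerProductGeometry
open scoped Real ENNReal

set_option maxHeartbeats 1000000 in
/-- two-sided elementary estimate for the angle ∠(η, η−ξ). -/
theorem angle_estimate_low :
    ∃ c C : ℝ, 0 < c ∧ 0 < C ∧ ∀ (ξ η : R2), η ≠ 0 → η ≠ ξ →
      c * (Real.sqrt ‖ξ‖ * Real.sqrt (‖ξ‖ - |‖η‖ - ‖η - ξ‖|) /
          (Real.sqrt ‖η‖ * Real.sqrt ‖η - ξ‖)) ≤ angle η (η - ξ) ∧
      angle η (η - ξ) ≤
        C * (Real.sqrt ‖ξ‖ * Real.sqrt (‖ξ‖ - |‖η‖ - ‖η - ξ‖|) /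
          (Real.sqrt ‖η‖ * Real.sqrt ‖η - ξ‖)) := by
  refine ⟨1, Real.pi, one_pos, Real.pi_pos, fun ξ η hη hηξ => ?_⟩
  set b : R2 := η - ξ with hbdef
  have hb : b ≠ 0 := sub_ne_zero.mpr hηξ
  have hna : (0:ℝ) < ‖η‖ := norm_pos_iff.mpr hη
  have hnb : (0:ℝ) < ‖b‖ := norm_pos_iff.mpr hb
  have hξeq : η - b = ξ := by simp [hbdef]
  set d : ℝ := |‖η‖ - ‖b‖| with hddef
  have hd : d ≤ ‖ξ‖ := by
    simpa [hξeq] using abs_norm_sub_norm_le η b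
  have hd0 : 0 ≤ d := abs_nonneg _
  have hd2 : d ^ 2 = (‖η‖ - ‖b‖) ^ 2 := sq_abs _
  set θ : ℝ := angle η b with hθdef
  have hθ0 : 0 ≤ θ := angle_nonneg η b
  have hθπ : θ ≤ Real.pi := angle_le_pi η b
  have hcos : Real.cos θ * (‖η‖ * ‖b‖) = (inner ℝ η b : ℝ) :=
    cos_angle_mul_norm_mul_norm η b
  have hnormsq : ‖ξ‖ ^ 2 = ‖η‖ ^ 2 - 2 * (inner ℝ η b : ℝ) + ‖b‖ ^ 2 := by
    rw [← hξeq]; exact norm_sub_sq_real η b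
  have hkey : ‖ξ‖ ^ 2 - d ^ 2 = 2 * (‖η‖ * ‖b‖) * (1 - Real.cos θ) := by
    rw [hd2]; linear_combination hnormsq + 2 * hcos
  have h2θ : 2 * (θ / 2) = θ := by ring
  have h1 : Real.sin (θ / 2) ^ 2 = 1 / 2 - Real.cos θ / 2 := by
    simpa [h2θ] using Real.sin_sq_eq_half_sub (θ / 2)
  have hkey' : ‖ξ‖ ^ 2 - d ^ 2 = 4 * (‖η‖ * ‖b‖) * Real.sin (θ / 2) ^ 2 := by
    rw [h1] at *; linarith [hkey]
  -- the quantity S and its square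
  set S : ℝ := Real.sqrt ‖ξ‖ * Real.sqrt (‖ξ‖ - d) /
      (Real.sqrt ‖η‖ * Real.sqrt ‖b‖) with hSdef
  have hS0 : 0 ≤ S := by positivity
  have hS2 : S ^ 2 = ‖ξ‖ * (‖ξ‖ - d) / (‖η‖ * ‖b‖) := by
    rw [hSdef, div_pow, mul_pow, mul_pow,
      Real.sq_sqrt (norm_nonneg ξ), Real.sq_sqrt (by linarith : (0:ℝ) ≤ ‖ξ‖ - d),
      Real.sq_sqrt hna.le, Real.sq_sqrt hnb.le]
  have hP : (0:ℝ) < ‖η‖ * ‖b‖ := mul_pos hna hnb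
  constructor
  · -- lower bound : S ≤ θ, i.e. 1 * S ≤ θ
    have hsinle : Real.sin (θ / 2) ≤ θ / 2 := Real.sin_le (by linarith)
    have hsinnn : (0:ℝ) ≤ Real.sin (θ / 2) :=
      Real.sin_nonneg_of_nonneg_of_le_pi (by linarith) (by linarith)
    have hsinsq : Real.sin (θ / 2) ^ 2 ≤ (θ / 2) ^ 2 := by nlinarith
    have hPsin : (‖η‖ * ‖b‖) * Real.sin (θ / 2) ^ 2 ≤ (‖η‖ * ‖b‖) * (θ / 2) ^ 2 :=
      mul_le_mul_of_nonneg_left hsinsq hP.le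
    have hdprod : (0:ℝ) ≤ d * (‖ξ‖ - d) := mul_nonneg hd0 (by linarith)
    have hup : ‖ξ‖ * (‖ξ‖ - d) ≤ θ ^ 2 * (‖η‖ * ‖b‖) := by linarith [hkey', hPsin, hdprod]
    have : S ^ 2 ≤ θ ^ 2 := by
      rw [hS2, div_le_iff₀ hP]; linarith
    have := le_of_pow_le_pow_left₀ two_ne_zero hθ0 this
    linarith
  · -- upper bound : θ ≤ π * S
    have hsinge : θ / Real.pi ≤ Real.sin (θ / 2) := by
      have h := Real.mul_le_sin (x := θ / 2) (by linarith) (by linarith)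
      have he : 2 / Real.pi * (θ / 2) = θ / Real.pi := by ring
      linarith [he ▸ h]
    have hθle : θ ≤ Real.pi * Real.sin (θ / 2) := by
      have := (div_le_iff₀ Real.pi_pos).mp hsinge
      linarith
    have hθsq : θ ^ 2 ≤ (Real.pi * Real.sin (θ / 2)) ^ 2 :=
      pow_le_pow_left₀ hθ0 hθle 2
    have hPθ : (‖η‖ * ‖b‖) * θ ^ 2 ≤ (‖η‖ * ‖b‖) * (Real.pi * Real.sin (θ / 2)) ^ 2 :=
      mul_le_mul_of_nonneg_left hθsq hP.le
    have hsq2 : (0:ℝ) ≤ Real.pi ^ 2 * (‖ξ‖ - d) ^ 2 :=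
      mul_nonneg (sq_nonneg _) (sq_nonneg _)
    have hkey2 : Real.pi ^ 2 * (‖ξ‖ ^ 2 - d ^ 2) =
        Real.pi ^ 2 * (4 * (‖η‖ * ‖b‖) * Real.sin (θ / 2) ^ 2) := by rw [hkey']
    have hlow : θ ^ 2 * (‖η‖ * ‖b‖) ≤ Real.pi ^ 2 * (‖ξ‖ * (‖ξ‖ - d)) := by
      linarith [hkey2, hPθ, hsq2, mul_nonneg hP.le (sq_nonneg θ)]
    have hsq : θ ^ 2 ≤ (Real.pi * S) ^ 2 := by
      have : θ ^ 2 ≤ Real.pi ^ 2 * (‖ξ‖ * (‖ξ‖ - d) / (‖η‖ * ‖b‖)) := by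
        rw [mul_div_assoc'] at *
        rw [le_div_iff₀ hP]
        linarith
      calc θ ^ 2 ≤ Real.pi ^ 2 * (‖ξ‖ * (‖ξ‖ - d) / (‖η‖ * ‖b‖)) := this
        _ = (Real.pi * S) ^ 2 := by rw [mul_pow, hS2]
    exact le_of_pow_le_pow_left₀ two_ne_zero (by positivity) hsq
end
end

section
/- There exist constants c, C > 0 such that for all ξ, η ∈ ℝ² with η ≠ 0 and η ≠ ξ, the angle ∠(η, ξ−η) satisfies c·R ≤ ∠(η, ξ−η) ≤ C·R, where R = (|η| + |ξ−η|)^{1/2} (|η| + |η−ξ| − |ξ|)^{1/2} / (|η|^{1/2} |η−ξ|^{1/2}). (Note |η| + |η−ξ| ≥ |ξ| by the triangle inequality, so R is well defined.) -/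
noncomputable section

open MeasureTheory Complex InnerProductGeometry
open scoped Real ENNReal

/-- two-sided elementary estimate for the angle ∠(η, ξ−η). -/
theorem angle_estimate_high :
    ∃ c C : ℝ, 0 < c ∧ 0 < C ∧ ∀ (ξ η : R2), η ≠ 0 → η ≠ ξ →
      c * (Real.sqrt (‖η‖ + ‖ξ - η‖) * Real.sqrt (‖η‖ + ‖η - ξ‖ - ‖ξ‖) /
          (Real.sqrt ‖η‖ * Real.sqrt ‖η - ξ‖)) ≤ angle η (ξ - η) ∧
      angle η (ξ - η) ≤
        C * (Real.sqrt (‖η‖ + ‖ξ - η‖) * Real.sqrt (‖η‖ + ‖η - ξ‖ - ‖ξ‖) /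
          (Real.sqrt ‖η‖ * Real.sqrt ‖η - ξ‖)) := by
  refine ⟨1, Real.pi, one_pos, Real.pi_pos, fun ξ η hη hηξ => ?_⟩
  have hb : ξ - η ≠ 0 := sub_ne_zero.2 (Ne.symm hηξ)
  set A := ‖η‖ with hAdef
  set B := ‖ξ - η‖ with hBdef
  set S := ‖ξ‖ with hSdef
  set θ := angle η (ξ - η) with hθdef
  have hA : 0 < A := norm_pos_iff.2 hη
  have hB : 0 < B := norm_pos_iff.2 hb
  have hSnn : 0 ≤ S := norm_nonneg _
  have hrev : ‖η - ξ‖ = B := by rw [norm_sub_rev]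
  have hS : S ≤ A + B := by
    have : ξ = η + (ξ - η) := by abel
    calc S = ‖η + (ξ - η)‖ := by rw [← this]
    _ ≤ A + B := norm_add_le _ _
  set c := Real.cos θ with hcdef
  have hinn : (inner ℝ η (ξ - η) : ℝ) = c * (A * B) := by
    rw [hcdef, hθdef, InnerProductGeometry.cos_angle_mul_norm_mul_norm]
  have hlaw : S ^ 2 = A ^ 2 + B ^ 2 + 2 * (c * (A * B)) := by
    have h1 : ‖η + (ξ - η)‖ ^ 2 = A ^ 2 + 2 * (inner ℝ η (ξ - η) : ℝ) + B ^ 2 :=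
      norm_add_sq_real η (ξ - η)
    have h2 : η + (ξ - η) = ξ := by abel
    rw [h2] at h1
    rw [hSdef, h1, hinn]; ring
  have hc1 : c ≤ 1 := Real.cos_le_one θ
  have hθ0 : 0 ≤ θ := InnerProductGeometry.angle_nonneg _ _
  have hθπ : θ ≤ Real.pi := InnerProductGeometry.angle_le_pi _ _
  -- the quadratic identity
  have hid : (A + B) ^ 2 - S ^ 2 = 2 * A * B * (1 - c) := by nlinarith [hlaw]
  have hABS : 0 ≤ A + B - S := by linarith
  set Q := (A + B) * (A + B - S) / (A * B) with hQdef
  have hABpos : 0 < A * B := mul_pos hA hB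
  have hQ2 : Q ≤ 2 * (1 - c) := by
    rw [hQdef, div_le_iff₀ hABpos]
    nlinarith [hid, hSnn, hABS, hA.le, hB.le]
  have hQ1 : 1 - c ≤ Q := by
    rw [hQdef, le_div_iff₀ hABpos]
    nlinarith [hid, hS, hABS, hA.le, hB.le]
  have hQnn : 0 ≤ Q := by positivity
  -- trig bounds
  have ht1 : 1 - c ≤ θ ^ 2 / 2 := by
    have := Real.one_sub_sq_div_two_le_cos (x := θ); rw [← hcdef] at this; linarith
  have ht2 : 2 / Real.pi ^ 2 * θ ^ 2 ≤ 1 - c := by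
    have := Real.cos_le_one_sub_mul_cos_sq (x := θ) (by rwa [_root_.abs_of_nonneg hθ0])
    rw [← hcdef] at this; linarith
  have hπ : (0:ℝ) < Real.pi := Real.pi_pos
  -- R = sqrt Q
  have hR : Real.sqrt (A + B) * Real.sqrt (A + B - S) / (Real.sqrt A * Real.sqrt B)
      = Real.sqrt Q := by
    rw [hQdef, ← Real.sqrt_mul (by linarith) , ← Real.sqrt_mul hA.le,
      ← Real.sqrt_div (by positivity)]
  rw [hrev, hR]
  constructor
  · have hQθ : Q ≤ θ ^ 2 := by linarith
    calc 1 * Real.sqrt Q = Real.sqrt Q := one_mul _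
    _ ≤ Real.sqrt (θ ^ 2) := Real.sqrt_le_sqrt hQθ
    _ = θ := by rw [Real.sqrt_sq hθ0]
  · have ht2' : 2 * θ ^ 2 ≤ Real.pi ^ 2 * (1 - c) := by
      have hπ2 : (0:ℝ) < Real.pi ^ 2 := by positivity
      rw [div_mul_eq_mul_div, div_le_iff₀ hπ2] at ht2
      linarith
    have hθQ : θ ^ 2 ≤ Real.pi ^ 2 * Q := by
      nlinarith [ht2', mul_le_mul_of_nonneg_left hQ1 (sq_nonneg Real.pi), hQnn, sq_nonneg Real.pi]
    calc θ = Real.sqrt (θ ^ 2) := (Real.sqrt_sq hθ0).symm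
    _ ≤ Real.sqrt (Real.pi ^ 2 * Q) := Real.sqrt_le_sqrt hθQ
    _ = Real.pi * Real.sqrt Q := by
        rw [Real.sqrt_mul (sq_nonneg _), Real.sqrt_sq hπ.le]
end
end
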